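/- Let z_n > 0 be defined by z_n^{-2} Φ(-z_n) = 1/(4n). Then z_n² > log n for all integers n ≥ 2. -/

import Mathlib

/-!
Gordon's lower bound for the Mills ratio, Φ(-z) ≥ φ(z) z / (1 + z²), turns the defining equation
into 4 n φ(z) ≤ z (1 + z²). Squaring, 16 n² e^{-z²} ≤ 2π z² (1 + z²)². If z² ≤ log n, then
e^{z²} ≤ n, so the left side is at least 16 e^{z²}, whereas 2π t (1 + t)² < 16 eᵗ for every t > 0.
-/

open MeasureTheory Set Filter Real

noncomputable def stdPDF (x : ℝ) : ℝ := Real.exp (-x^2/2) / Real.sqrt (2*Real.pi)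

noncomputable def stdCDF (t : ℝ) : ℝ := ∫ x in Set.Iic t, stdPDF x

lemma stdPDF_pos (x : ℝ) : 0 < stdPDF x := by
  unfold stdPDF
  positivity

lemma stdPDF_neg (x : ℝ) : stdPDF (-x) = stdPDF x := by
  simp only [stdPDF, neg_sq]

lemma stdPDF_sq (x : ℝ) : stdPDF x ^ 2 = exp (-x ^ 2) / (2 * π) := by
  rw [stdPDF, div_pow, sq_sqrt (by positivity), ← exp_nat_mul]
  ring_nf

lemma continuous_stdPDF : Continuous stdPDF := by
  unfold stdPDF
  fun_prop

lemma integrable_stdPDF : Integrable stdPDF := by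
  convert (integrable_exp_neg_mul_sq (by norm_num : (0 : ℝ) < 1 / 2)).div_const
    (sqrt (2 * π)) using 2 with x
  simp only [stdPDF]
  ring_nf

lemma hasDerivAt_stdPDF (x : ℝ) : HasDerivAt stdPDF (-(x * stdPDF x)) x := by
  have hexponent : HasDerivAt (fun y : ℝ => -y ^ 2 / 2) (-x) x :=
    ((hasDerivAt_pow 2 x).neg.div_const 2).congr_deriv (by norm_num; ring)
  refine (hexponent.exp.div_const (sqrt (2 * π))).congr_deriv (f := stdPDF) ?_
  simp only [stdPDF]
  ring

lemma tendsto_stdPDF_atTop : Tendsto stdPDF atTop (nhds 0) := by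
  have h : Tendsto (fun x : ℝ => x ^ 2 / 2) atTop atTop :=
    (tendsto_pow_atTop two_ne_zero).atTop_div_const two_pos
  convert (tendsto_exp_neg_atTop_nhds_zero.comp h).div_const (sqrt (2 * π)) using 1
  · ext x; simp only [stdPDF, Function.comp, neg_div]
  · simp

lemma setIntegral_Ioi_stdPDF (s : ℝ) : ∫ x in Ioi s, stdPDF x = stdCDF (-s) := by
  rw [stdCDF, ← integral_comp_neg_Ioi]
  simp only [stdPDF_neg]

lemma hasDerivAt_stdPDF_mul_div (x : ℝ) :
    HasDerivAt (fun y => stdPDF y * (y / (1 + y ^ 2)))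
      (stdPDF x * ((1 - 2 * x ^ 2 - x ^ 4) / (1 + x ^ 2) ^ 2)) x := by
  have hden : HasDerivAt (fun y : ℝ => 1 + y ^ 2) (2 * x) x := by
    simpa using (hasDerivAt_pow 2 x).const_add 1
  refine ((hasDerivAt_stdPDF x).mul ((hasDerivAt_id' x).div hden (by positivity))).congr_deriv ?_
  simp only [Pi.div_apply]
  field_simp
  ring

lemma abs_div_one_add_sq_sq_le_one (x : ℝ) :
    |(1 - 2 * x ^ 2 - x ^ 4) / (1 + x ^ 2) ^ 2| ≤ 1 := by
  rw [abs_div, abs_of_pos (by positivity : (0 : ℝ) < (1 + x ^ 2) ^ 2),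
    div_le_one (by positivity), abs_le]
  constructor <;> nlinarith [sq_nonneg x, sq_nonneg (x ^ 2)]

lemma tendsto_stdPDF_mul_div_atTop :
    Tendsto (fun x => stdPDF x * (x / (1 + x ^ 2))) atTop (nhds 0) := by
  refine tendsto_of_tendsto_of_tendsto_of_le_of_le' tendsto_const_nhds tendsto_stdPDF_atTop ?_ ?_
  all_goals
    filter_upwards [eventually_ge_atTop (0 : ℝ)] with x hx
    have hq : x / (1 + x ^ 2) ≤ 1 := by
      rw [div_le_one (by positivity)]; nlinarith [sq_nonneg (x - 1)]
  · exact mul_nonneg (stdPDF_pos x).le (by positivity)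
  · exact mul_le_of_le_one_right (stdPDF_pos x).le hq

/-- Gordon's inequality. The left side vanishes at `+∞` and its derivative is `-φ` times a factor
of absolute value at most one. -/
lemma stdPDF_mul_div_le_stdCDF_neg (s : ℝ) : stdPDF s * (s / (1 + s ^ 2)) ≤ stdCDF (-s) := by
  set q : ℝ → ℝ := fun x => (1 - 2 * x ^ 2 - x ^ 4) / (1 + x ^ 2) ^ 2
  have hint : Integrable (fun x => stdPDF x * q x) := by
    refine integrable_stdPDF.mono' (continuous_stdPDF.mul ?_).aestronglyMeasurable ?_
    · exact Continuous.div (by fun_prop) (by fun_prop) fun x => by positivity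
    · filter_upwards with x
      rw [norm_mul, Real.norm_of_nonneg (stdPDF_pos x).le]
      exact mul_le_of_le_one_right (stdPDF_pos x).le (abs_div_one_add_sq_sq_le_one x)
  have hftc : ∫ x in Ioi s, stdPDF x * q x = 0 - stdPDF s * (s / (1 + s ^ 2)) :=
    integral_Ioi_of_hasDerivAt_of_tendsto' (fun x _ => hasDerivAt_stdPDF_mul_div x)
      hint.integrableOn tendsto_stdPDF_mul_div_atTop
  calc stdPDF s * (s / (1 + s ^ 2)) = ∫ x in Ioi s, -(stdPDF x * q x) := by
        rw [integral_neg, hftc]; ring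
    _ ≤ ∫ x in Ioi s, stdPDF x := by
        refine setIntegral_mono hint.neg.integrableOn integrable_stdPDF.integrableOn fun x => ?_
        have := (abs_le.mp (abs_div_one_add_sq_sq_le_one x)).1
        nlinarith [stdPDF_pos x]
    _ = stdCDF (-s) := setIntegral_Ioi_stdPDF s

/-- The maximum of `2π t (1 + t)² e^{-t}`, at `t = 1 + √2`, is about `15.8`: the margin is thin,
so this needs the degree-9 Taylor bound for `exp` and `π < 3.15`. -/
lemma two_pi_mul_mul_one_add_sq_lt_exp {t : ℝ} (ht : 0 < t) :
    2 * π * t * (1 + t) ^ 2 < 16 * exp t := by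
  have hexp : 1 + t + t^2/2 + t^3/6 + t^4/24 + t^5/120 + t^6/720 + t^7/5040
      + t^8/40320 + t^9/362880 ≤ exp t := by
    refine le_trans (le_of_eq ?_) (sum_le_exp_of_nonneg ht.le 10)
    simp [Finset.sum_range_succ, Nat.factorial]
  have h0 := ht.le
  have hsq := sq_nonneg (t - 2.4)
  nlinarith [mul_nonneg h0 hsq, mul_nonneg (pow_nonneg h0 2) hsq,
    mul_nonneg (pow_nonneg h0 3) hsq, mul_nonneg (pow_nonneg h0 4) hsq,
    pow_pos ht 5, pow_pos ht 7, pow_pos ht 9, pi_gt_three, pi_lt_d2]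

theorem stmt19_general (n : ℕ) (z : ℝ) (hz : 0 < z)
    (heq : z⁻¹^2 * stdCDF (-z) = 1/(4*(n:ℝ))) :
    Real.log n < z^2 := by
  by_contra! hlog
  have hn : 0 < (n : ℝ) :=
    zero_lt_one.trans <| (log_pos_iff n.cast_nonneg).1 <| (pow_pos hz 2).trans_le hlog
  have hexp : exp (z ^ 2) ≤ n := (le_log_iff_exp_le hn).1 hlog
  have htail : stdCDF (-z) = z ^ 2 / (4 * n) := by
    field_simp at heq ⊢
    linarith
  have hgordon : 4 * n * stdPDF z ≤ z * (1 + z ^ 2) := by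
    have h := stdPDF_mul_div_le_stdCDF_neg z
    rw [htail, mul_div_assoc', div_le_div_iff₀ (by positivity) (by positivity)] at h
    nlinarith
  have hsq : 16 * n ^ 2 * exp (-z ^ 2) ≤ 2 * π * z ^ 2 * (1 + z ^ 2) ^ 2 := by
    have h := pow_le_pow_left₀ (by positivity [stdPDF_pos z]) hgordon 2
    rw [mul_pow, stdPDF_sq] at h
    field_simp at h
    linarith
  have hlower : 16 * exp (z ^ 2) ≤ 16 * n ^ 2 * exp (-z ^ 2) := by
    rw [exp_neg, ← div_eq_mul_inv, le_div_iff₀ (exp_pos _)]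
    nlinarith [exp_pos (z ^ 2)]
  linarith [two_pi_mul_mul_one_add_sq_lt_exp (pow_pos hz 2)]

/-- If z_n > 0 solves z⁻² Φ(-z) = 1/(4n), then z_n² > log n for n ≥ 2. -/
theorem stmt19 (n : ℕ) (hn : 2 ≤ n) (z : ℝ) (hz : 0 < z)
    (heq : z⁻¹^2 * stdCDF (-z) = 1/(4*(n:ℝ))) :
    Real.log n < z^2 :=
  stmt19_general n z hz heq
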